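/- Fix real ω ≥ 3 and suppose α = log₂(n)/(e·log₂(ω)) + 1 and s satisfies log₂(s) ≤ (α − 1)·log₂(e + ω·log₂(ω)/log₂(n)). Then for n sufficiently large (depending on nothing else), log₂(n − α) − log₂(s) ≥ log₂(n)/2, and consequently α·(log₂(n − α) − log₂(s)) ≥ log₂²(n)/(2e·log₂(ω)). -/
import Mathlib

set_option maxHeartbeats 1000000 in
/-- the key arithmetic estimate. With `α = log₂(n)/(e·log₂(ω)) + 1` and
`log₂(s) ≤ (α − 1)·log₂(e + ω·log₂(ω)/log₂(n))`, for `n` sufficiently large one has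
`log₂(n − α) − log₂(s) ≥ log₂(n)/2` and consequently
`α·(log₂(n − α) − log₂(s)) ≥ log₂²(n)/(2e·log₂(ω))`. -/
theorem stmt_19 (ω : ℝ) (hω : 3 ≤ ω) :
    ∃ n₀ : ℝ, ∀ n : ℝ, n₀ ≤ n → ∀ α s : ℝ, 0 < s →
      α = Real.logb 2 n / (Real.exp 1 * Real.logb 2 ω) + 1 →
      Real.logb 2 s ≤ (α - 1) * Real.logb 2 (Real.exp 1 + ω * Real.logb 2 ω / Real.logb 2 n) →
      Real.logb 2 (n - α) - Real.logb 2 s ≥ Real.logb 2 n / 2 ∧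
        α * (Real.logb 2 (n - α) - Real.logb 2 s) ≥
          (Real.logb 2 n) ^ 2 / (2 * Real.exp 1 * Real.logb 2 ω) := by
  have h12 : (1:ℝ) < 2 := one_lt_two
  have hlog2 : (0:ℝ) < Real.log 2 := Real.log_pos h12
  have he1 : (2.7:ℝ) ≤ Real.exp 1 := by
    have := Real.exp_one_gt_d9; linarith
  have he2 : Real.exp 1 ≤ 2.7182818286 := le_of_lt Real.exp_one_lt_d9
  -- logb 2 3 ≥ 3/2
  have h89 : (3:ℝ) * Real.log 2 ≤ 2 * Real.log 3 := by
    have h : Real.log 8 ≤ Real.log 9 := Real.log_le_log (by norm_num) (by norm_num)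
    have h8 : Real.log 8 = 3 * Real.log 2 := by
      rw [show (8:ℝ) = 2 ^ (3:ℕ) by norm_num, Real.log_pow]; push_cast; ring
    have h9 : Real.log 9 = 2 * Real.log 3 := by
      rw [show (9:ℝ) = 3 ^ (2:ℕ) by norm_num, Real.log_pow]; push_cast; ring
    linarith
  have hlb3 : (3:ℝ)/2 ≤ Real.logb 2 3 := by
    rw [Real.logb, le_div_iff₀ hlog2]; linarith
  have hlbω : (3:ℝ)/2 ≤ Real.logb 2 ω :=
    le_trans hlb3 (Real.logb_le_logb_of_le h12 (by norm_num) hω)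
  have hlbωpos : 0 < Real.logb 2 ω := by linarith
  have helω : (4.05:ℝ) ≤ Real.exp 1 * Real.logb 2 ω := by nlinarith
  have hωlbpos : 0 < ω * Real.logb 2 ω := by positivity
  refine ⟨(2:ℝ) ^ (162:ℕ) + (2:ℝ) ^ (ω * Real.logb 2 ω), fun n hn α s hs hα hls => ?_⟩
  have hrpos : (0:ℝ) < (2:ℝ) ^ (ω * Real.logb 2 ω) := Real.rpow_pos_of_pos two_pos _
  have hn162 : (2:ℝ) ^ (162:ℕ) ≤ n := by linarith
  have hnω : (2:ℝ) ^ (ω * Real.logb 2 ω) ≤ n := by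
    have h162pos : (0:ℝ) < (2:ℝ) ^ (162:ℕ) := by positivity
    linarith
  have hnpos : (0:ℝ) < n := lt_of_lt_of_le (by positivity) hn162
  set L : ℝ := Real.logb 2 n with hL
  have hL162 : (162:ℝ) ≤ L := by
    rw [hL, Real.le_logb_iff_rpow_le h12 hnpos]
    rw [show ((162:ℝ)) = ((162:ℕ):ℝ) by norm_num, Real.rpow_natCast]
    exact hn162
  have hLpos : (0:ℝ) < L := by linarith
  have hLω : ω * Real.logb 2 ω ≤ L := by
    rw [hL, Real.le_logb_iff_rpow_le h12 hnpos]; exact hnω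
  -- bound L by sqrt n
  have hsq : Real.sqrt n * Real.sqrt n = n := Real.mul_self_sqrt hnpos.le
  have hsqpos : 0 < Real.sqrt n := Real.sqrt_pos.mpr hnpos
  have hsq10 : (10:ℝ) ≤ Real.sqrt n := by
    nlinarith [hsq, hn162, show ((2:ℝ)^(162:ℕ)) ≥ 100 by norm_num]
  have hlogn : Real.log n ≤ 2 * Real.sqrt n - 2 := by
    have := Real.log_le_sub_one_of_pos hsqpos
    have hls : Real.log (Real.sqrt n) = Real.log n / 2 := Real.log_sqrt hnpos.le
    linarith
  have hlog2half : (1:ℝ)/2 ≤ Real.log 2 := by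
    have := Real.log_two_gt_d9; linarith
  have hLsqrt : L ≤ 4 * Real.sqrt n := by
    rw [hL, Real.logb, div_le_iff₀ hlog2]
    nlinarith
  -- α ≤ n/2
  have hα1 : α - 1 = L / (Real.exp 1 * Real.logb 2 ω) := by rw [hα]; ring
  have hα1nn : 0 ≤ α - 1 := by rw [hα1]; positivity
  have hα1le : α - 1 ≤ L / 4.05 := by
    rw [hα1]
    exact div_le_div_of_nonneg_left hLpos.le (by norm_num) helω
  have hαn2 : α ≤ n / 2 := by
    have : α - 1 ≤ L := by
      calc α - 1 ≤ L / 4.05 := hα1le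
        _ ≤ L := div_le_self hLpos.le (by norm_num)
    nlinarith
  have hn2pos : 0 < n / 2 := by linarith
  have hlognα : L - 1 ≤ Real.logb 2 (n - α) := by
    have h1 : Real.logb 2 (n/2) ≤ Real.logb 2 (n - α) :=
      Real.logb_le_logb_of_le h12 hn2pos (by linarith)
    have h2 : Real.logb 2 (n/2) = L - 1 := by
      rw [Real.logb_div (by positivity) (by norm_num), Real.logb_self_eq_one h12]
    linarith
  -- bound logb 2 s
  have hx1 : ω * Real.logb 2 ω / L ≤ 1 := by
    rw [div_le_one hLpos]; exact hLω
  have hxnn : 0 ≤ ω * Real.logb 2 ω / L := by positivity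
  have harg : Real.logb 2 (Real.exp 1 + ω * Real.logb 2 ω / L) ≤ 2 := by
    have h4 : Real.exp 1 + ω * Real.logb 2 ω / L ≤ 4 := by linarith
    have hpos : 0 < Real.exp 1 + ω * Real.logb 2 ω / L := by
      have := Real.exp_pos 1; linarith
    calc Real.logb 2 (Real.exp 1 + ω * Real.logb 2 ω / L)
        ≤ Real.logb 2 4 := Real.logb_le_logb_of_le h12 hpos h4
      _ = 2 := by
          rw [show (4:ℝ) = 2 ^ (2:ℕ) by norm_num, Real.logb_pow,
            Real.logb_self_eq_one h12]
          push_cast; ring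
  have hlogs : Real.logb 2 s ≤ (40/81) * L := by
    calc Real.logb 2 s ≤ (α - 1) * Real.logb 2 (Real.exp 1 + ω * Real.logb 2 ω / L) := hls
      _ ≤ (α - 1) * 2 := mul_le_mul_of_nonneg_left harg hα1nn
      _ ≤ (L / 4.05) * 2 := by linarith
      _ = (40/81) * L := by ring
  -- first claim
  have hdiff : Real.logb 2 (n - α) - Real.logb 2 s ≥ L / 2 := by
    have : L - 1 - (40/81) * L ≥ L / 2 := by linarith
    linarith
  refine ⟨hdiff, ?_⟩
  -- second claim
  have hαlb : L / (Real.exp 1 * Real.logb 2 ω) ≤ α := by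
    rw [hα]; exact le_add_of_nonneg_right zero_le_one
  have hαlb0 : 0 ≤ L / (Real.exp 1 * Real.logb 2 ω) := by positivity
  have key : (L / (Real.exp 1 * Real.logb 2 ω)) * (L / 2)
      ≤ α * (Real.logb 2 (n - α) - Real.logb 2 s) :=
    mul_le_mul hαlb hdiff (by positivity) (by linarith)
  have heq : (L / (Real.exp 1 * Real.logb 2 ω)) * (L / 2)
      = L ^ 2 / (2 * Real.exp 1 * Real.logb 2 ω) := by
    field_simp
  exact heq ▸ key
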